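/- Let φ(x) = (√3/π) ∫₀ˣ (arctan u³)/u² du and let f be the solution on [0,∞) of the ODE f' = (1 − φ(f))^{1/2} with f(0) = 0. Then f is defined on all of [0,∞), f is strictly increasing, 0 < f'(r) < 1 for r > 0, f''(r) < 0 for r > 0, f(r) → ∞ as r → ∞, and f'(r) → 0 as r → ∞. -/

import Mathlib

open Filter Real

/-- φ(x) = (√3/π) ∫₀ˣ (arctan u³)/u² du. -/
noncomputable def phi (x : ℝ) : ℝ :=
  (Real.sqrt 3 / π) * ∫ u in (0:ℝ)..x, Real.arctan (u ^ 3) / u ^ 2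

/-!
The integrand of `φ` is odd and positive on `(0, ∞)`, so `φ` is even, vanishes at `0` and
increases on `[0, ∞)`. An explicit primitive of the integrand shows `φ(x) → 1` as `x → ∞`
(the integral over `(0, ∞)` is `π / √3`), hence `0 ≤ φ < 1` and `F = √(1 - φ)` takes values in
`(0, 1]`. The autonomous equation `f' = F(f)` is then solved by separation of variables: `f` is
the inverse of `g(y) = ∫₀ʸ 1 / F`, a bijection of `ℝ` because `g' ≥ 1`. Differentiating once more,
`f'' = F'(f) F(f) = -(√3 / 2π) arctan(f³) / f² < 0` for `r > 0`, and `f' = F(f) → √(1 - 1) = 0`.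
-/

open Topology

lemma abs_arctan_le_abs (x : ℝ) : |arctan x| ≤ |x| := by
  have hlip : LipschitzWith 1 arctan :=
    lipschitzWith_of_nnnorm_deriv_le differentiable_arctan fun y => by
      rw [← NNReal.coe_le_coe, coe_nnnorm, Real.deriv_arctan, NNReal.coe_one, norm_div, norm_one,
        Real.norm_of_nonneg (by positivity)]
      exact div_le_one_of_le₀ (by nlinarith [sq_nonneg y]) (by positivity)
  simpa using hlip.dist_le_mul x 0

/- At `u = 0` the integrand takes the junk value `0`, which is also its limit there. -/
lemma continuous_arctan_pow_three_div_sq : Continuous fun u : ℝ => arctan (u ^ 3) / u ^ 2 := by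
  refine continuous_iff_continuousAt.2 fun u => ?_
  rcases eq_or_ne u 0 with rfl | hu
  · have hbound (v : ℝ) : ‖arctan (v ^ 3) / v ^ 2‖ ≤ |v| := by
      rcases eq_or_ne v 0 with rfl | hv
      · simp
      rw [norm_div, norm_pow, Real.norm_eq_abs, div_le_iff₀ (by positivity)]
      calc |arctan (v ^ 3)| ≤ |v ^ 3| := abs_arctan_le_abs _
        _ = |v| * |v| ^ 2 := by rw [abs_pow]; ring
    have : Tendsto (fun v : ℝ => |v|) (𝓝 0) (𝓝 0) := by
      simpa using continuous_abs.tendsto (0 : ℝ)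
    simpa [ContinuousAt] using squeeze_zero_norm hbound this
  · exact (continuous_arctan.comp (continuous_pow 3)).continuousAt.div
      (continuous_pow 2).continuousAt (pow_ne_zero 2 hu)

lemma continuous_arctan_pow_three_div : Continuous fun u : ℝ => arctan (u ^ 3) / u := by
  have h (u : ℝ) : arctan (u ^ 3) / u = u * (arctan (u ^ 3) / u ^ 2) := by
    rcases eq_or_ne u 0 with rfl | hu
    · simp
    · field_simp
  simpa only [h] using continuous_id'.fun_mul continuous_arctan_pow_three_div_sq

lemma pow_four_sub_sq_add_one_pos (u : ℝ) : 0 < u ^ 4 - u ^ 2 + 1 := by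
  nlinarith [sq_nonneg (u ^ 2 - 1), sq_nonneg u]

/- Integration by parts gives `arctan u³ / u² = (-arctan u³ / u)' + 3u / (1 + u⁶)`; the last two
terms are the partial-fraction primitive of `3u / (1 + u⁶)`, using
`1 + u⁶ = (1 + u²)(u⁴ - u² + 1)`. -/
noncomputable def phiPrimitive (u : ℝ) : ℝ :=
  -(arctan (u ^ 3) / u) + log ((1 + u ^ 2) ^ 2 / (u ^ 4 - u ^ 2 + 1)) / 4 +
    √3 / 2 * arctan ((2 * u ^ 2 - 1) / √3)

lemma hasDerivAt_phiPrimitive_of_ne {u : ℝ} (hu : u ≠ 0) :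
    HasDerivAt phiPrimitive (arctan (u ^ 3) / u ^ 2) u := by
  have hq := (pow_four_sub_sq_add_one_pos u).ne'
  have hq' : u ^ 2 * (u ^ 2 - 1) + 1 ≠ 0 := by convert hq using 1; ring
  have hN := ((hasDerivAt_pow 2 u).const_add 1).fun_pow 2
  have hD := ((hasDerivAt_pow 4 u).sub (hasDerivAt_pow 2 u)).add_const 1
  have hA := (((hasDerivAt_pow 2 u).const_mul 2).sub_const 1).div_const √3
  have hlog := (hN.div hD hq).log (div_pos (by positivity) (pow_four_sub_sq_add_one_pos u)).ne'
  have h := (((hasDerivAt_pow 3 u).arctan.div (hasDerivAt_id u) hu).neg.add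
    (hlog.div_const 4)).add (hA.arctan.const_mul (√3 / 2))
  refine (show HasDerivAt phiPrimitive _ u from h).congr_deriv ?_
  have hs : √3 ^ 2 = 3 := sq_sqrt (by norm_num)
  simp only [Pi.sub_apply, Pi.div_apply, id_eq, Nat.cast_ofNat]
  field_simp
  rw [hs]
  ring

lemma continuous_phiPrimitive : Continuous phiPrimitive := by
  have hlog : Continuous fun u : ℝ => log ((1 + u ^ 2) ^ 2 / (u ^ 4 - u ^ 2 + 1)) :=
    Continuous.log (by fun_prop (disch := exact fun u => (pow_four_sub_sq_add_one_pos u).ne'))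
      fun u => (div_pos (by positivity) (pow_four_sub_sq_add_one_pos u)).ne'
  unfold phiPrimitive
  have := continuous_arctan_pow_three_div
  fun_prop

lemma hasDerivAt_phiPrimitive (u : ℝ) : HasDerivAt phiPrimitive (arctan (u ^ 3) / u ^ 2) u :=
  hasDerivAt_of_hasDerivAt_of_ne' (fun _ hv => hasDerivAt_phiPrimitive_of_ne hv)
    continuous_phiPrimitive.continuousAt continuous_arctan_pow_three_div_sq.continuousAt u

lemma phiPrimitive_zero : phiPrimitive 0 = -(√3 * π / 12) := by
  have harg : (2 * 0 ^ 2 - 1) / √3 = -(√3)⁻¹ := by ring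
  rw [phiPrimitive, harg, arctan_neg, arctan_inv_sqrt_three]
  norm_num
  ring

lemma phiPrimitive_neg (u : ℝ) : phiPrimitive (-u) = phiPrimitive u := by
  simp [phiPrimitive, Odd.neg_pow (by decide : Odd 3), Even.neg_pow (by decide : Even 2),
    Even.neg_pow (by decide : Even 4), neg_div_neg_eq]

lemma tendsto_phiPrimitive_atTop : Tendsto phiPrimitive atTop (𝓝 (√3 * π / 4)) := by
  have h₁ : Tendsto (fun u : ℝ => arctan (u ^ 3) / u) atTop (𝓝 0) :=
    ((tendsto_arctan_atTop.mono_right nhdsWithin_le_nhds).comp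
      (tendsto_pow_atTop three_ne_zero)).div_atTop tendsto_id
  have hratio : Tendsto (fun u : ℝ => (1 + u ^ 2) ^ 2 / (u ^ 4 - u ^ 2 + 1)) atTop (𝓝 1) := by
    have hcont : Continuous fun t : ℝ => (t ^ 2 + 1) ^ 2 / (1 - t ^ 2 + t ^ 4) :=
      by fun_prop (disch := exact fun t => by nlinarith [pow_four_sub_sq_add_one_pos t])
    have := (hcont.tendsto 0).comp tendsto_inv_atTop_zero
    norm_num at this
    refine this.congr' ?_
    filter_upwards [eventually_ne_atTop 0] with u hu
    simp only [Function.comp_apply]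
    field_simp
  have h₂ := ((continuousAt_log one_ne_zero).tendsto.comp hratio).div_const 4
  have hin : Tendsto (fun u : ℝ => (2 * u ^ 2 - 1) / √3) atTop atTop := by
    refine Tendsto.atTop_div_const (by positivity) ?_
    simpa only [sub_eq_add_neg] using tendsto_atTop_add_const_right _ (-1)
      ((tendsto_pow_atTop two_ne_zero).const_mul_atTop two_pos)
  have h₃ := ((tendsto_arctan_atTop.mono_right nhdsWithin_le_nhds).comp hin).const_mul (√3 / 2)
  convert (h₁.neg.add h₂).add h₃ using 2
  · rfl
  · rw [log_one]; ring

lemma phi_eq_phiPrimitive_sub (x : ℝ) : phi x = √3 / π * (phiPrimitive x - phiPrimitive 0) := by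
  rw [phi, intervalIntegral.integral_eq_sub_of_hasDerivAt (fun u _ => hasDerivAt_phiPrimitive u)
    (continuous_arctan_pow_three_div_sq.intervalIntegrable 0 x)]

lemma hasDerivAt_phi (x : ℝ) : HasDerivAt phi (√3 / π * (arctan (x ^ 3) / x ^ 2)) x :=
  (continuous_arctan_pow_three_div_sq.integral_hasStrictDerivAt 0 x).hasDerivAt.const_mul _

lemma continuous_phi : Continuous phi :=
  continuous_iff_continuousAt.2 fun x => (hasDerivAt_phi x).continuousAt

lemma phi_neg (x : ℝ) : phi (-x) = phi x := by
  rw [phi_eq_phiPrimitive_sub, phi_eq_phiPrimitive_sub, phiPrimitive_neg]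

lemma tendsto_phi_atTop : Tendsto phi atTop (𝓝 1) := by
  rw [show phi = fun x => √3 / π * (phiPrimitive x - phiPrimitive 0) from
    funext phi_eq_phiPrimitive_sub]
  convert (tendsto_phiPrimitive_atTop.sub_const _).const_mul (√3 / π) using 2
  rw [phiPrimitive_zero]
  field_simp
  norm_num

lemma strictMonoOn_phi : StrictMonoOn phi (Set.Ici 0) := by
  refine strictMonoOn_of_deriv_pos (convex_Ici 0) continuous_phi.continuousOn fun x hx => ?_
  rw [interior_Ici, Set.mem_Ioi] at hx
  rw [(hasDerivAt_phi x).deriv]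
  have : 0 < arctan (x ^ 3) := arctan_pos.2 (pow_pos hx 3)
  positivity

lemma phi_pos {x : ℝ} (hx : 0 < x) : 0 < phi x := by
  simpa [phi] using strictMonoOn_phi Set.self_mem_Ici hx.le hx

lemma phi_nonneg (x : ℝ) : 0 ≤ phi x := by
  rcases lt_trichotomy x 0 with hx | rfl | hx
  · rw [← phi_neg]; exact (phi_pos (neg_pos.2 hx)).le
  · simp [phi]
  · exact (phi_pos hx).le

lemma phi_lt_one (x : ℝ) : phi x < 1 := by
  wlog hx : 0 ≤ x
  · simpa [phi_neg] using this (-x) (by linarith)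
  have hle : phi (x + 1) ≤ 1 :=
    ge_of_tendsto tendsto_phi_atTop <| eventually_atTop.2 ⟨x + 1, fun y hy =>
      strictMonoOn_phi.monotoneOn (by simp; linarith) (by simp; linarith) hy⟩
  exact (strictMonoOn_phi hx (by simp; linarith) (by linarith)).trans_le hle

lemma surjective_of_hasDerivAt_ge {g g' : ℝ → ℝ} {c : ℝ} (hc : 0 < c)
    (hg : ∀ x, HasDerivAt g (g' x) x) (hge : ∀ x, c ≤ g' x) : Function.Surjective g := by
  have hmono : Monotone fun x => g x - c * x :=
    monotone_of_hasDerivAt_nonneg (fun x => (hg x).sub ((hasDerivAt_id x).const_mul c))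
      fun x => by simpa using hge x
  refine (continuous_iff_continuousAt.2 fun x => (hg x).continuousAt).surjective ?_ ?_
  · refine tendsto_atTop_mono' _ ((eventually_ge_atTop 0).mono fun x hx => ?_)
      (tendsto_atTop_add_const_left _ (g 0) (tendsto_id.const_mul_atTop hc))
    simpa [le_sub_iff_add_le] using hmono hx
  · refine tendsto_atBot_mono' _ ((eventually_le_atBot 0).mono fun x hx => ?_)
      (tendsto_atBot_add_const_left _ (g 0) (tendsto_id.const_mul_atBot hc))
    simpa [sub_le_iff_le_add'] using hmono hx

theorem exists_strictMono_hasDerivAt_comp {F : ℝ → ℝ} {M : ℝ} (hF : Continuous F)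
    (hpos : ∀ y, 0 < F y) (hle : ∀ y, F y ≤ M) :
    ∃ f : ℝ → ℝ, f 0 = 0 ∧ StrictMono f ∧ (∀ x, HasDerivAt f (F (f x)) x) ∧
      Tendsto f atTop atTop := by
  set g : ℝ → ℝ := fun y => ∫ u in 0..y, (F u)⁻¹
  have hg (y : ℝ) : HasDerivAt g (F y)⁻¹ y :=
    ((hF.inv₀ fun u => (hpos u).ne').integral_hasStrictDerivAt 0 y).hasDerivAt
  have hsurj := surjective_of_hasDerivAt_ge (inv_pos.2 ((hpos 0).trans_le (hle 0))) hg
    fun y => inv_anti₀ (hpos y) (hle y)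
  let e := (strictMono_of_hasDerivAt_pos hg fun y => inv_pos.2 (hpos y)).orderIsoOfSurjective g
    hsurj
  refine ⟨e.symm, ?_, e.symm.strictMono, fun x => ?_, e.symm.tendsto_atTop⟩
  · exact e.symm_apply_eq.2 (by simp [e, g])
  · simpa using HasDerivAt.of_local_left_inverse e.symm.continuous.continuousAt
      (hg (e.symm x)) (inv_ne_zero (hpos _).ne') (Eventually.of_forall e.apply_symm_apply)

lemma hasDerivAt_sqrt_one_sub_phi (y : ℝ) :
    HasDerivAt (fun y => √(1 - phi y))
      (-(√3 / π * (arctan (y ^ 3) / y ^ 2)) / (2 * √(1 - phi y))) y :=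
  ((hasDerivAt_phi y).const_sub 1).sqrt (sub_pos.2 (phi_lt_one y)).ne'

theorem exists_solution_f :
    ∃ f : ℝ → ℝ, f 0 = 0 ∧
      (∀ r ∈ Set.Ici (0:ℝ), HasDerivAt f (Real.sqrt (1 - phi (f r))) r) ∧
      StrictMonoOn f (Set.Ici (0:ℝ)) ∧
      (∀ r > (0:ℝ), 0 < deriv f r ∧ deriv f r < 1) ∧
      (∀ r > (0:ℝ), deriv (deriv f) r < 0) ∧
      Tendsto f atTop atTop ∧
      Tendsto (deriv f) atTop (nhds 0) := by
  have hspeed (y : ℝ) : 0 < √(1 - phi y) := sqrt_pos.2 (sub_pos.2 (phi_lt_one y))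
  obtain ⟨f, hf0, hfmono, hf, hftop⟩ := exists_strictMono_hasDerivAt_comp
    (F := fun y => √(1 - phi y)) (continuous_const.fun_sub continuous_phi).sqrt hspeed
    fun y => sqrt_le_one.2 (by linarith [phi_nonneg y])
  have hderiv : deriv f = fun r => √(1 - phi (f r)) := funext fun r => (hf r).deriv
  have hf'' (r : ℝ) : HasDerivAt (deriv f) (-(√3 / (2 * π)) * (arctan (f r ^ 3) / f r ^ 2)) r := by
    rw [hderiv]
    refine ((hasDerivAt_sqrt_one_sub_phi (f r)).comp r (hf r)).congr_deriv ?_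
    field_simp [(hspeed (f r)).ne']
  have hfpos {r : ℝ} (hr : 0 < r) : 0 < f r := hf0 ▸ hfmono hr
  refine ⟨f, hf0, fun r _ => hf r, hfmono.strictMonoOn _, fun r hr => ?_, fun r hr => ?_, hftop, ?_⟩
  · rw [hderiv]
    exact ⟨hspeed _, (sqrt_lt' one_pos).2 (by linarith [phi_pos (hfpos hr)])⟩
  · rw [(hf'' r).deriv, neg_mul]
    have hfr := hfpos hr
    have hatan : 0 < arctan (f r ^ 3) := arctan_pos.2 (by positivity)
    exact neg_neg_of_pos (by positivity)
  · rw [hderiv]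
    simpa using ((tendsto_phi_atTop.comp hftop).const_sub 1).sqrt
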